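/- arXiv:1701.01999 — 2 statements merged into one kernel-verified Lean document; each statement's English description precedes it below -/
import Mathlib

section
/- The Peres gate, i.e. the permutation of three-qubit basis states |a,b,c⟩ ↦ |a, a XOR b, (a AND b) XOR c⟩, is realized exactly by the four two-qubit gates CV†(2,3) · CNOT(1,2) · CV(2,3) · CV(1,3) as 8×8 complex matrices (matrix product written with the last-applied gate on the left). -/
open Complex Matrix Kronecker

noncomputable def V : Matrix (Fin 2) (Fin 2) ℂ :=
  !![(1 + I)/2, (1 - I)/2; (1 - I)/2, (1 + I)/2]

noncomputable def I₂ : Matrix (Fin 2) (Fin 2) ℂ := 1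

noncomputable def P₀ : Matrix (Fin 2) (Fin 2) ℂ := !![1, 0; 0, 0]

noncomputable def P₁ : Matrix (Fin 2) (Fin 2) ℂ := !![0, 0; 0, 1]

noncomputable def X : Matrix (Fin 2) (Fin 2) ℂ := !![0, 1; 1, 0]

/-- CV(1,3): apply V to qubit 3 when qubit 1 is 1. -/
noncomputable def CV13 := P₀ ⊗ₖ I₂ ⊗ₖ I₂ + P₁ ⊗ₖ I₂ ⊗ₖ V

/-- CV(2,3): apply V to qubit 3 when qubit 2 is 1. -/
noncomputable def CV23 := I₂ ⊗ₖ P₀ ⊗ₖ I₂ + I₂ ⊗ₖ P₁ ⊗ₖ V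

/-- CV†(2,3): apply V† to qubit 3 when qubit 2 is 1. -/
noncomputable def CVd23 := I₂ ⊗ₖ P₀ ⊗ₖ I₂ + I₂ ⊗ₖ P₁ ⊗ₖ Vᴴ

/-- CNOT(1,2): flip qubit 2 when qubit 1 is 1. -/
noncomputable def CNOT12 := P₀ ⊗ₖ I₂ ⊗ₖ I₂ + P₁ ⊗ₖ X ⊗ₖ I₂

/-- The Peres gate: the permutation matrix sending the basis vector indexed by
(a,b,c) to the basis vector indexed by (a, a XOR b, (a AND b) XOR c); in `Fin 2`,
XOR is addition and AND is multiplication. -/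
noncomputable def Peres : Matrix ((Fin 2 × Fin 2) × Fin 2) ((Fin 2 × Fin 2) × Fin 2) ℂ :=
  Matrix.of fun i j =>
    if i = ((j.1.1, j.1.1 + j.1.2), j.1.1 * j.1.2 + j.2) then 1 else 0

/-!
Every gate of the circuit, and the Peres gate itself, is classically controlled by the first two
qubits: it sends `|x⟩ ⊗ |t⟩` to `|f x⟩ ⊗ U x |t⟩`. Such gates compose by composing the maps `f` and
multiplying the target operators along the way. The circuit therefore applies the CNOT map
`(a, b) ↦ (a, a ⊕ b)` to the control and `V†^(a ⊕ b) V^b V^a` to the target, and since `V² = X` and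
`V† V = 1` this operator is `X^(a ∧ b)`.
-/

section ControlledGate

variable {m n R : Type*} [Fintype m] [DecidableEq m] [Fintype n] [Semiring R]

/-- The gate `|x⟩ ⊗ |t⟩ ↦ |f x⟩ ⊗ U x |t⟩` with control register `m` and target `n`. -/
def controlledGate (f : m → m) (U : m → Matrix n n R) : Matrix (m × n) (m × n) R :=
  of fun i j => if i.1 = f j.1 then U j.1 i.2 j.2 else 0

theorem controlledGate_mul (f g : m → m) (U W : m → Matrix n n R) :
    controlledGate f U * controlledGate g W =
      controlledGate (f ∘ g) fun z => U (g z) * W z := by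
  ext ⟨x, t⟩ ⟨z, r⟩
  simp [controlledGate, mul_apply, Fintype.sum_prod_type, ite_mul, Finset.sum_ite_eq']

end ControlledGate

theorem pow_xor_mul_pow_mul_pow_eq_pow_and {M : Type*} [Monoid M] {v w x : M}
    (hv : v * v = x) (hw : w * v = 1) (a b : Fin 2) :
    w ^ ((a + b : Fin 2) : ℕ) * v ^ (b : ℕ) * v ^ (a : ℕ) = x ^ ((a * b : Fin 2) : ℕ) := by
  fin_cases a <;> fin_cases b <;> simp [hv, hw]

theorem V_mul_V : V * V = X := by
  ext i j
  fin_cases i <;> fin_cases j <;> simp [V, X, mul_apply, Complex.ext_iff] <;> norm_num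

theorem conjTranspose_V_mul_V : Vᴴ * V = 1 := by
  ext i j
  fin_cases i <;> fin_cases j <;> simp [V, mul_apply, Complex.ext_iff, map_ofNat] <;> norm_num

theorem controlledGate_id_pow_fst (U : Matrix (Fin 2) (Fin 2) ℂ) :
    controlledGate id (fun x => U ^ (x.1 : ℕ)) = P₀ ⊗ₖ I₂ ⊗ₖ I₂ + P₁ ⊗ₖ I₂ ⊗ₖ U := by
  ext ⟨⟨a, b⟩, c⟩ ⟨⟨a', b'⟩, c'⟩
  fin_cases a <;> fin_cases a' <;> fin_cases b <;> fin_cases b' <;>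
    simp [controlledGate, P₀, P₁, I₂, one_apply]

theorem controlledGate_id_pow_snd (U : Matrix (Fin 2) (Fin 2) ℂ) :
    controlledGate id (fun x => U ^ (x.2 : ℕ)) = I₂ ⊗ₖ P₀ ⊗ₖ I₂ + I₂ ⊗ₖ P₁ ⊗ₖ U := by
  ext ⟨⟨a, b⟩, c⟩ ⟨⟨a', b'⟩, c'⟩
  fin_cases a <;> fin_cases a' <;> fin_cases b <;> fin_cases b' <;>
    simp [controlledGate, P₀, P₁, I₂, one_apply]

def cnotBits (x : Fin 2 × Fin 2) : Fin 2 × Fin 2 := (x.1, x.1 + x.2)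

theorem CNOT12_eq_controlledGate : CNOT12 = controlledGate cnotBits 1 := by
  ext ⟨⟨a, b⟩, c⟩ ⟨⟨a', b'⟩, c'⟩
  fin_cases a <;> fin_cases a' <;> fin_cases b <;> fin_cases b' <;>
    simp [CNOT12, controlledGate, cnotBits, P₀, P₁, I₂, X, one_apply]

theorem Peres_eq_controlledGate :
    Peres = controlledGate cnotBits fun x => X ^ ((x.1 * x.2 : Fin 2) : ℕ) := by
  ext ⟨⟨a, b⟩, c⟩ ⟨⟨a', b'⟩, c'⟩
  fin_cases a <;> fin_cases a' <;> fin_cases b <;> fin_cases b' <;> fin_cases c <;> fin_cases c' <;>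
    simp [Peres, controlledGate, cnotBits, X]

/-- The Peres gate is realized exactly by four two-qubit gates. -/
theorem peres_four_gate_decomposition :
    CVd23 * CNOT12 * CV23 * CV13 = Peres := by
  rw [CVd23, CV23, CV13, ← controlledGate_id_pow_fst, ← controlledGate_id_pow_snd,
    ← controlledGate_id_pow_snd, CNOT12_eq_controlledGate, Peres_eq_controlledGate]
  simp only [controlledGate_mul, Pi.one_apply, mul_one]
  congr 1
  funext ⟨a, b⟩
  exact pow_xor_mul_pow_mul_pow_eq_pow_and V_mul_V conjTranspose_V_mul_V a b
end

section
/- Upper bound on the Reed-Muller Form I: an arbitrary Boolean function expressed in Reed-Muller form as the EXOR of k > 1 product terms T₁, …, T_k (each Tᵢ a set of nᵢ > 2 control variables among n input variables) can be built from at most k + Σᵢ 2^(nᵢ - 2) two-bit-controlled Toffoli gates using ancilla bits. Precisely: there exist a number A of ancilla wires and a list of at most Σᵢ (2^(nᵢ-2) + 1) two-control Toffoli gate functions on states s : Fin (n + 1 + A) → Bool such that, for every state whose ancilla coordinates are all false, the composition leaves the n input coordinates unchanged and replaces the output coordinate y by y XOR (⨁ᵢ ∏_{j ∈ Tᵢ}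 xⱼ). -/
/-- The two-control Toffoli gate on distinct wires `i`, `j` (controls) and `k`
(target): coordinate `k` is updated to `s k XOR (s i AND s j)`. -/
def toffoli2 {w : ℕ} (i j k : Fin w) (s : Fin w → Bool) : Fin w → Bool :=
  Function.update s k (xor (s k) (s i && s j))

/-!
A product of `m ≥ 2` control wires is XORed into a target by computing the AND of the first
two controls into a clean ancilla, recursing on the product that has this ancilla in their
place, and uncomputing the ancilla again. This takes `2m - 3` Toffoli gates and returns every
ancilla to `false`, so the circuits of all the terms can share one block of ancillas and run one
after the other, each XORing its product into the output wire. Finally `2m - 3 ≤ 2^(m-2) + 1`.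
-/

open Function

theorem two_mul_le_two_pow (j : ℕ) : 2 * j ≤ 2 ^ j := by
  induction j with
  | zero => simp
  | succ j ih =>
    rcases Nat.eq_zero_or_pos j with rfl | hj
    · simp
    · have := Nat.one_lt_two_pow hj.ne'
      rw [pow_succ]
      omega

theorem two_mul_sub_three_le (m : ℕ) : 2 * m - 3 ≤ 2 ^ (m - 2) + 1 := by
  have := two_mul_le_two_pow (m - 2)
  omega

theorem List.all_update_of_notMem {α : Type*} [DecidableEq α] {l : List α} {a : α} (h : a ∉ l)
    (s : α → Bool) (b : Bool) : l.all (update s a b) = l.all s := by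
  induction l with
  | nil => rfl
  | cons x l ih =>
    simp only [List.mem_cons, not_or] at h
    simp [List.all_cons, update_of_ne (Ne.symm h.1), ih h.2]

theorem Finset.all_toList {α : Type*} (T : Finset α) (f : α → Bool) :
    T.toList.all f = T.inf f := by
  rw [Bool.eq_iff_iff, List.all_eq_true, ← top_eq_true, Finset.inf_eq_top_iff]
  simp

def runCircuit {α : Type*} (G : List (α → α)) (s : α) : α :=
  G.foldl (fun st g => g st) s

@[simp] theorem runCircuit_nil {α : Type*} (s : α) : runCircuit [] s = s := rfl

@[simp] theorem runCircuit_cons {α : Type*} (g : α → α) (G : List (α → α)) (s : α) :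
    runCircuit (g :: G) s = runCircuit G (g s) := rfl

@[simp] theorem runCircuit_append {α : Type*} (G H : List (α → α)) (s : α) :
    runCircuit (G ++ H) s = runCircuit H (runCircuit G s) :=
  List.foldl_append

theorem runCircuit_flatMap {α ι : Type*} [DecidableEq α] (t : α) (P : (α → Bool) → Prop)
    (hP : ∀ s b, P s → P (update s t b)) (G : ι → List ((α → Bool) → α → Bool))
    (f : ι → (α → Bool) → Bool)
    (hG : ∀ i s, P s → runCircuit (G i) s = update s t (xor (s t) (f i s)))
    (hf : ∀ i s b, f i (update s t b) = f i s) (l : List ι) (s : α → Bool) (hs : P s) :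
    runCircuit (l.flatMap G) s =
      update s t (xor (s t) ((l.map fun i => f i s).foldr xor false)) := by
  induction l generalizing s with
  | nil => simp
  | cons i l ih =>
    rw [List.flatMap_cons, runCircuit_append, hG i s hs, ih _ (hP _ _ hs)]
    simp [hf]

section Toffoli

variable {w : ℕ}

def IsToffoli2 (g : (Fin w → Bool) → Fin w → Bool) : Prop :=
  ∃ i j m : Fin w, i ≠ j ∧ i ≠ m ∧ j ≠ m ∧ g = toffoli2 i j m

theorem toffoli2_apply_of_ne {i j m x : Fin w} (h : x ≠ m) (s : Fin w → Bool) :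
    toffoli2 i j m s x = s x :=
  update_of_ne h _ _

theorem toffoli2_apply_target (i j m : Fin w) (s : Fin w → Bool) :
    toffoli2 i j m s m = xor (s m) (s i && s j) :=
  update_self _ _ _

theorem toffoli2_involutive {i j m : Fin w} (hi : i ≠ m) (hj : j ≠ m) :
    Involutive (toffoli2 i j m) := by
  intro s
  rw [toffoli2, toffoli2_apply_target, toffoli2_apply_of_ne hi, toffoli2_apply_of_ne hj,
    Bool.xor_assoc, Bool.xor_self, Bool.xor_false, toffoli2, update_idem, update_eq_self]

theorem toffoli2_update {i j m t : Fin w} (hi : t ≠ i) (hj : t ≠ j) (hm : t ≠ m)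
    (s : Fin w → Bool) (b : Bool) :
    toffoli2 i j m (update s t b) = update (toffoli2 i j m s) t b := by
  rw [toffoli2, toffoli2, update_of_ne hi.symm, update_of_ne hj.symm, update_of_ne hm.symm,
    update_comm hm.symm]

theorem nodup_recursive_wires_of_nodup {α : Type*} {t i j c a : α} {cs as : List α}
    (h : (t :: (i :: j :: c :: cs ++ a :: as)).Nodup) : (t :: (a :: c :: cs ++ as)).Nodup := by
  have hsub : (t :: (c :: cs ++ a :: as)).Sublist (t :: (i :: j :: c :: cs ++ a :: as)) := by
    simp
  exact (List.perm_middle.cons t).nodup_iff.mp (h.sublist hsub)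

def mcToffoli (t : Fin w) :
    List (Fin w) → List (Fin w) → List ((Fin w → Bool) → Fin w → Bool)
  | [i, j], _ => [toffoli2 i j t]
  | i :: j :: c :: cs, a :: as =>
    toffoli2 i j a :: (mcToffoli t (a :: c :: cs) as ++ [toffoli2 i j a])
  | _, _ => []

theorem length_mcToffoli (t : Fin w) (cs anc : List (Fin w))
    (hanc : cs.length ≤ anc.length + 2) :
    (mcToffoli t cs anc).length = 2 * cs.length - 3 := by
  fun_induction mcToffoli t cs anc with
  | case1 => simp
  | case2 i j c cs a as ih =>
    simp only [List.length_cons] at hanc ih ⊢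
    simp only [List.length_append, ih (by omega), List.length_cons, List.length_nil]
    omega
  | case3 anc cs h₂ h₃ =>
    rcases cs with _ | ⟨i, _ | ⟨j, _ | ⟨c, cs⟩⟩⟩ <;> rcases anc with _ | ⟨a, as⟩ <;>
      first | exact (h₃ _ _ _ _ _ _ rfl rfl).elim | exact (h₂ _ _ rfl).elim | simp_all

theorem isToffoli2_of_mem_mcToffoli (t : Fin w) (cs anc : List (Fin w))
    (hnd : (t :: (cs ++ anc)).Nodup) :
    ∀ g ∈ mcToffoli t cs anc, IsToffoli2 g := by
  fun_induction mcToffoli t cs anc with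
  | case1 anc i j =>
    simp only [List.mem_singleton, forall_eq]
    simp only [List.cons_append, List.nil_append, List.nodup_cons, List.mem_cons, not_or] at hnd
    exact ⟨i, j, t, by grind⟩
  | case2 i j c cs a as ih =>
    have hrec := nodup_recursive_wires_of_nodup hnd
    simp only [List.cons_append, List.nodup_cons, List.mem_cons, List.mem_append, not_or] at hnd
    have hgate : IsToffoli2 (toffoli2 i j a) := ⟨i, j, a, by grind⟩
    simp only [List.mem_cons, List.mem_append, List.not_mem_nil, or_false]
    rintro g (rfl | hg | rfl)
    · exact hgate
    · exact ih hrec g hg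
    · exact hgate
  | case3 => simp

theorem runCircuit_mcToffoli (t : Fin w) (cs anc : List (Fin w)) (h2 : 2 ≤ cs.length)
    (hanc : cs.length ≤ anc.length + 2) (hnd : (t :: (cs ++ anc)).Nodup) (s : Fin w → Bool)
    (hs : ∀ a ∈ anc, s a = false) :
    runCircuit (mcToffoli t cs anc) s = update s t (xor (s t) (cs.all s)) := by
  fun_induction mcToffoli t cs anc generalizing s with
  | case1 anc i j => simp [toffoli2]
  | case2 i j c cs a as ih =>
    have hrec := nodup_recursive_wires_of_nodup hnd
    simp only [List.mem_cons, forall_eq_or_imp] at hs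
    simp only [List.cons_append, List.nodup_cons, List.mem_cons, List.mem_append, not_or] at hnd
    have hacs : a ∉ c :: cs := by grind
    have hs₁ : toffoli2 i j a s = update s a (s i && s j) := by simp [toffoli2, hs.1]
    have hs₁as : ∀ x ∈ as, toffoli2 i j a s x = false := fun x hx => by
      rw [toffoli2_apply_of_ne (by grind)]
      exact hs.2 x hx
    have hrun := ih (by simp) (by simp at hanc ⊢; omega) hrec _ hs₁as
    -- the recursive circuit changes only `t` and clean ancillas, so the last gate undoes the first
    rw [runCircuit_cons, runCircuit_append, hrun, runCircuit_cons, runCircuit_nil,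
      toffoli2_update (by grind) (by grind) (by grind), toffoli2_involutive (by grind) (by grind) s,
      hs₁, update_of_ne (by grind), List.all_cons, update_self, List.all_update_of_notMem hacs]
    simp [Bool.and_assoc]
  | case3 anc cs h₂ h₃ =>
    rcases cs with _ | ⟨i, _ | ⟨j, _ | ⟨c, cs⟩⟩⟩ <;> rcases anc with _ | ⟨a, as⟩ <;>
      first | exact (h₃ _ _ _ _ _ _ rfl rfl).elim | exact (h₂ _ _ rfl).elim | simp_all

theorem runCircuit_flatMap_mcToffoli {ι : Type*} (t : Fin w) (anc : List (Fin w))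
    (cs : ι → List (Fin w))
    (hlen : ∀ i, 2 ≤ (cs i).length ∧ (cs i).length ≤ anc.length + 2)
    (hnd : ∀ i, (t :: (cs i ++ anc)).Nodup) (hta : t ∉ anc) (l : List ι) (s : Fin w → Bool)
    (hs : ∀ a ∈ anc, s a = false) :
    runCircuit (l.flatMap fun i => mcToffoli t (cs i) anc) s =
      update s t (xor (s t) ((l.map fun i => (cs i).all s).foldr xor false)) :=
  runCircuit_flatMap t (fun s => ∀ a ∈ anc, s a = false)
    (fun s b hs a ha => by rw [update_of_ne (by rintro rfl; exact hta ha)]; exact hs a ha)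
    _ _ (fun i s hs => runCircuit_mcToffoli t (cs i) anc (hlen i).1 (hlen i).2 (hnd i) s hs)
    (fun i s b => List.all_update_of_notMem
      (fun h => (List.nodup_cons.mp (hnd i)).1 (List.mem_append_left _ h)) s b) l s hs

end Toffoli

section Layout

variable {n : ℕ}

def outputWire (n : ℕ) : Fin (n + 1 + n) := ⟨n, by omega⟩

-- A term has at most `n` controls, so `n` shared ancillas are enough.
def ancillaWires (n : ℕ) : List (Fin (n + 1 + n)) := List.ofFn (Fin.natAdd (n + 1))

noncomputable def inputWires (T : Finset (Fin n)) : List (Fin (n + 1 + n)) :=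
  T.toList.map (Fin.castLE (by omega))

theorem length_inputWires (T : Finset (Fin n)) : (inputWires T).length = T.card := by
  simp [inputWires]

theorem length_ancillaWires : (ancillaWires n).length = n := by
  simp [ancillaWires]

theorem lt_val_of_mem_ancillaWires {a : Fin (n + 1 + n)} (ha : a ∈ ancillaWires n) :
    n < a.val := by
  obtain ⟨r, rfl⟩ := List.mem_ofFn.mp ha
  simp only [Fin.val_natAdd]
  omega

theorem val_lt_of_mem_inputWires {T : Finset (Fin n)} {c : Fin (n + 1 + n)}
    (hc : c ∈ inputWires T) : c.val < n := by
  obtain ⟨j, -, rfl⟩ := List.mem_map.mp hc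
  exact j.isLt

theorem nodup_outputWire_cons_inputWires_append_ancillaWires (T : Finset (Fin n)) :
    (outputWire n :: (inputWires T ++ ancillaWires n)).Nodup := by
  refine List.nodup_cons.mpr ⟨fun h => ?_, List.nodup_append.mpr ⟨?_, ?_, ?_⟩⟩
  · rcases List.mem_append.mp h with h | h
    · exact (val_lt_of_mem_inputWires h).ne rfl
    · exact (lt_val_of_mem_ancillaWires h).ne rfl
  · exact T.nodup_toList.map (Fin.castLE_injective _)
  · exact List.nodup_ofFn.mpr (Fin.natAdd_injective _ _)
  · rintro c hc a ha rfl
    exact absurd (val_lt_of_mem_inputWires hc) (lt_val_of_mem_ancillaWires ha).not_gt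

theorem all_inputWires (T : Finset (Fin n)) (s : Fin (n + 1 + n) → Bool) :
    (inputWires T).all s = T.inf fun j => s (Fin.castLE (by omega) j) := by
  rw [inputWires, List.all_map, Finset.all_toList]
  rfl

end Layout

/-- Upper bound on the Reed-Muller Form I: a Boolean function given as the EXOR of
`k > 1` products of positive literals `T₁, …, T_k`, each with more than 2 variables,
is realized on wires `Fin (n+1+A)` (inputs `0,…,n-1`, output `n`, ancillas the rest)
by at most `Σᵢ (2^(nᵢ-2) + 1)` two-control Toffoli gates: on every state whose
ancilla coordinates are all `false`, the composition leaves the inputs unchanged and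
XORs the output with `⨁ᵢ ∏_{j ∈ Tᵢ} xⱼ`. -/
theorem reed_muller_upper_bound (n k : ℕ)
    (T : Fin k → Finset (Fin n)) (hT : ∀ i, 2 < (T i).card) :
    ∃ (A : ℕ) (L : List ((Fin (n + 1 + A) → Bool) → (Fin (n + 1 + A) → Bool))),
      L.length ≤ ∑ i : Fin k, (2 ^ ((T i).card - 2) + 1) ∧
      (∀ g ∈ L, ∃ i j m : Fin (n + 1 + A),
        i ≠ j ∧ i ≠ m ∧ j ≠ m ∧ g = toffoli2 i j m) ∧
      ∀ s : Fin (n + 1 + A) → Bool,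
        (∀ a : Fin (n + 1 + A), n < a.val → s a = false) →
        (∀ c : Fin (n + 1 + A), c.val < n →
          (L.foldl (fun st g => g st) s) c = s c) ∧
        (L.foldl (fun st g => g st) s) ⟨n, by omega⟩ =
          xor (s ⟨n, by omega⟩)
            ((List.ofFn fun i : Fin k =>
                (T i).inf fun j => s (Fin.castLE (by omega) j)).foldr xor false) := by
  have hnd := nodup_outputWire_cons_inputWires_append_ancillaWires (n := n)
  have hlen (i : Fin k) : 2 ≤ (inputWires (T i)).length ∧
      (inputWires (T i)).length ≤ (ancillaWires n).length + 2 := by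
    have := card_finset_fin_le (T i)
    rw [length_inputWires, length_ancillaWires]
    exact ⟨(hT i).le, by omega⟩
  refine ⟨n, (List.finRange k).flatMap fun i =>
    mcToffoli (outputWire n) (inputWires (T i)) (ancillaWires n), ?_, ?_, fun s hs => ?_⟩
  · rw [List.length_flatMap, ← Fin.sum_univ_def]
    refine Finset.sum_le_sum fun i _ => ?_
    rw [length_mcToffoli _ _ _ (hlen i).2, length_inputWires]
    exact two_mul_sub_three_le (T i).card
  · simp only [List.mem_flatMap]
    rintro g ⟨i, -, hg⟩
    exact isToffoli2_of_mem_mcToffoli _ _ _ (hnd (T i)) g hg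
  · have hrun := runCircuit_flatMap_mcToffoli (outputWire n) (ancillaWires n)
      (fun i => inputWires (T i)) hlen (fun i => hnd (T i))
      (fun h => (lt_val_of_mem_ancillaWires h).ne rfl) (List.finRange k) s
      (fun a ha => hs a (lt_val_of_mem_ancillaWires ha))
    refine ⟨fun c hc => ?_, ?_⟩
    · change runCircuit _ s c = s c
      rw [hrun, update_of_ne (by rintro rfl; exact hc.ne rfl)]
    · change runCircuit _ s (outputWire n) = _
      simp only [hrun, update_self, all_inputWires, List.ofFn_eq_map]
      rfl
end
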